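/- Let $u\in W^{1,2}(D^2,\mathbb{R}^m)\cap C^0(D^2,\mathbb{R}^m)$, let $R_0>0$ and let $F:D^2\times(0,R_0)\to(0,\infty)$ satisfy: for all $\varrho\in(0,R_0)$ and $a\in D^2$ with $B_\varrho(a)\subset D^2$, one has $|u(x)-u(y)|\le F(a,\varrho)$ for all $x,y\in B_{\varrho/2}(a)$. If $F(\cdot,\varrho)\to 0$ as $\varrho\to0$ uniformly on $D^2$, and if the trace of $u$ on $\partial D^2$ is continuous, then $u$ extends to a continuous function on $\overline{D^2}$. -/

import Mathlib

open MeasureTheory Metric Real ENNReal NNReal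

noncomputable section

abbrev E2 := EuclideanSpace ℝ (Fin 2)
abbrev Em (m : ℕ) := EuclideanSpace ℝ (Fin m)

/-- the point with polar coordinates `(r, θ)` in `ℝ²` -/
def polar (r θ : ℝ) : E2 := (WithLp.equiv 2 (Fin 2 → ℝ)).symm ![r * Real.cos θ, r * Real.sin θ]

section StrzeleckiAux
open Set

lemma polar_zero (r θ : ℝ) : polar r θ 0 = r * Real.cos θ := by simp [polar]
lemma polar_one' (r θ : ℝ) : polar r θ 1 = r * Real.sin θ := by simp [polar]
lemma polar_smul (r θ : ℝ) : polar r θ = r • polar 1 θ := by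
  ext i
  fin_cases i <;> simp [polar]
lemma norm_polar (r θ : ℝ) : ‖polar r θ‖ = |r| := by
  rw [EuclideanSpace.norm_eq]
  simp only [Fin.sum_univ_two, polar_zero, polar_one', Real.norm_eq_abs, sq_abs]
  rw [show (r * Real.cos θ) ^ 2 + (r * Real.sin θ) ^ 2
      = r^2 * ((Real.sin θ)^2 + (Real.cos θ)^2) by ring]
  simp [Real.sin_sq_add_cos_sq, Real.sqrt_sq_eq_abs]
lemma norm_polar_one (θ : ℝ) : ‖polar 1 θ‖ = 1 := by simp [norm_polar]
lemma dist_polar_radial (r r' θ : ℝ) : dist (polar r θ) (polar r' θ) = |r - r'| := by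
  rw [dist_eq_norm, polar_smul r θ, polar_smul r' θ, ← sub_smul, norm_smul, norm_polar_one]
  simp
lemma polar_mem_ball (r θ : ℝ) (h0 : 0 ≤ r) (h1 : r < 1) : polar r θ ∈ ball (0:E2) 1 := by
  rw [mem_ball_zero_iff, norm_polar, abs_of_nonneg h0]; exact h1
lemma dist_polar_angle (r θ θ' : ℝ) (hr : 0 ≤ r) :
    dist (polar r θ) (polar r θ') ≤ Real.sqrt 2 * (r * |θ - θ'|) := by
  have hc : |Real.cos θ - Real.cos θ'| ≤ |θ - θ'| := by
    rw [Real.cos_sub_cos, abs_mul, abs_mul]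
    have a1 : |Real.sin ((θ + θ') / 2)| ≤ 1 := Real.abs_sin_le_one _
    have a2 : |Real.sin ((θ - θ') / 2)| ≤ |(θ - θ') / 2| := Real.abs_sin_le_abs
    have a3 : (0:ℝ) ≤ |Real.sin ((θ + θ') / 2)| := abs_nonneg _
    have a4 : (0:ℝ) ≤ |Real.sin ((θ - θ') / 2)| := abs_nonneg _
    have a5 : |(θ - θ') / 2| = |θ - θ'| / 2 := by rw [abs_div, abs_two]
    rw [a5] at a2
    have : |(-2:ℝ)| = 2 := by norm_num
    rw [this]
    nlinarith
  have hs : |Real.sin θ - Real.sin θ'| ≤ |θ - θ'| := by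
    rw [Real.sin_sub_sin, abs_mul, abs_mul]
    have a1 : |Real.cos ((θ + θ') / 2)| ≤ 1 := Real.abs_cos_le_one _
    have a2 : |Real.sin ((θ - θ') / 2)| ≤ |(θ - θ') / 2| := Real.abs_sin_le_abs
    have a3 : (0:ℝ) ≤ |Real.cos ((θ + θ') / 2)| := abs_nonneg _
    have a4 : (0:ℝ) ≤ |Real.sin ((θ - θ') / 2)| := abs_nonneg _
    have a5 : |(θ - θ') / 2| = |θ - θ'| / 2 := by rw [abs_div, abs_two]
    rw [a5] at a2
    have : |(2:ℝ)| = 2 := by norm_num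
    rw [this]
    nlinarith
  rw [dist_eq_norm, EuclideanSpace.norm_eq]
  simp only [Fin.sum_univ_two]
  have e0 : (polar r θ - polar r θ') 0 = r * (Real.cos θ - Real.cos θ') := by
    simp [polar_zero]; ring
  have e1 : (polar r θ - polar r θ') 1 = r * (Real.sin θ - Real.sin θ') := by
    simp [polar_one']; ring
  rw [e0, e1]
  have key : ‖r * (Real.cos θ - Real.cos θ')‖ ^ 2 + ‖r * (Real.sin θ - Real.sin θ')‖ ^ 2
      ≤ 2 * (r * |θ - θ'|) ^ 2 := by
    rw [Real.norm_eq_abs, Real.norm_eq_abs, abs_mul, abs_mul, abs_of_nonneg hr]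
    have h1 : (r * |Real.cos θ - Real.cos θ'|) ^ 2 ≤ (r * |θ - θ'|) ^ 2 := by
      have : r * |Real.cos θ - Real.cos θ'| ≤ r * |θ - θ'| := by
        exact mul_le_mul_of_nonneg_left hc hr
      have h0 : (0:ℝ) ≤ r * |Real.cos θ - Real.cos θ'| := by positivity
      nlinarith
    have h2 : (r * |Real.sin θ - Real.sin θ'|) ^ 2 ≤ (r * |θ - θ'|) ^ 2 := by
      have : r * |Real.sin θ - Real.sin θ'| ≤ r * |θ - θ'| := by
        exact mul_le_mul_of_nonneg_left hs hr
      have h0 : (0:ℝ) ≤ r * |Real.sin θ - Real.sin θ'| := by positivity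
      nlinarith
    nlinarith
  calc Real.sqrt (‖r * (Real.cos θ - Real.cos θ')‖ ^ 2 + ‖r * (Real.sin θ - Real.sin θ')‖ ^ 2)
      ≤ Real.sqrt (2 * (r * |θ - θ'|) ^ 2) := Real.sqrt_le_sqrt key
    _ = Real.sqrt 2 * (r * |θ - θ'|) := by
        rw [Real.sqrt_mul (by norm_num)]
        congr 1
        exact Real.sqrt_sq (by positivity)
lemma polar_periodic (r θ : ℝ) : polar r (θ + 2 * π) = polar r θ := by
  ext i; fin_cases i <;> simp [polar, Real.cos_add_two_pi, Real.sin_add_two_pi]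
lemma exists_angle (x : E2) (hx : x ≠ 0) : ∃ θ ∈ Set.Ioc (-π) π, x = polar ‖x‖ θ := by
  set z : ℂ := ⟨x 0, x 1⟩ with hz
  have hz0 : z ≠ 0 := by
    intro h
    apply hx
    have h0 : x 0 = 0 := congrArg Complex.re h
    have h1 : x 1 = 0 := congrArg Complex.im h
    ext i; fin_cases i <;> simpa
  have habs : ‖z‖ = ‖x‖ := by
    rw [EuclideanSpace.norm_eq, Complex.norm_def, Complex.normSq_apply]
    simp [Fin.sum_univ_two, hz, sq]
  refine ⟨z.arg, ⟨Complex.neg_pi_lt_arg z, Complex.arg_le_pi z⟩, ?_⟩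
  ext i
  fin_cases i
  · show x 0 = polar ‖x‖ z.arg 0
    rw [polar_zero, ← habs, Complex.cos_arg hz0]
    rw [mul_comm, div_mul_cancel₀]
    simpa using norm_ne_zero_iff.mpr hz0
  · show x 1 = polar ‖x‖ z.arg 1
    rw [polar_one', ← habs, Complex.sin_arg]
    rw [mul_comm, div_mul_cancel₀]
    simpa using norm_ne_zero_iff.mpr hz0
/-- measurable equiv E2 ≃ ℝ×ℝ, measure preserving -/
def e2equiv : E2 ≃ᵐ ℝ × ℝ :=
  (MeasurableEquiv.toLp 2 (Fin 2 → ℝ)).symm.trans MeasurableEquiv.finTwoArrow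

lemma e2equiv_preserving : MeasurePreserving e2equiv volume volume :=
  (volume_preserving_finTwoArrow ℝ).comp (EuclideanSpace.volume_preserving_symm_measurableEquiv_toLp (Fin 2))

lemma e2equiv_symm_preserving : MeasurePreserving e2equiv.symm volume volume :=
  e2equiv_preserving.symm e2equiv

lemma e2equiv_polar (p : ℝ × ℝ) :
    e2equiv (polar p.1 p.2) = polarCoord.symm p := by
  show e2equiv (polar p.1 p.2) = (p.1 * Real.cos p.2, p.1 * Real.sin p.2)
  simp [e2equiv, polar, MeasurableEquiv.finTwoArrow, MeasurableEquiv.toLp,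
    MeasurableEquiv.trans, Prod.ext_iff]
  exact ⟨rfl, rfl⟩

lemma e2equiv_symm_polar (p : ℝ × ℝ) :
    e2equiv.symm (polarCoord.symm p) = polar p.1 p.2 := by
  rw [← e2equiv_polar p, MeasurableEquiv.symm_apply_apply]

lemma polarCoord_target_eq : polarCoord.target = Ioi (0:ℝ) ×ˢ Ioo (-π) π := rfl

lemma sector_lintegral (G : E2 → ℝ≥0∞) (hG : Measurable G) (s : Set (ℝ×ℝ))
    (hs : MeasurableSet s) (hsub : s ⊆ polarCoord.target) :
    ∫⁻ x in (fun p : ℝ × ℝ => polar p.1 p.2) '' s, G x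
      = ∫⁻ p in s, ENNReal.ofReal p.1 * G (polar p.1 p.2) := by
  have himg : (fun p : ℝ × ℝ => polar p.1 p.2) '' s = e2equiv.symm '' (polarCoord.symm '' s) := by
    rw [Set.image_image]
    exact Set.image_congr fun p _ => (e2equiv_symm_polar p).symm
  rw [himg]
  rw [← e2equiv_symm_preserving.setLIntegral_comp_emb
    e2equiv.symm.measurableEmbedding G (polarCoord.symm '' s)]
  set B : ℝ × ℝ → ℝ × ℝ →L[ℝ] ℝ × ℝ := fun p =>
    LinearMap.toContinuousLinearMap (Matrix.toLin (Module.Basis.finTwoProd ℝ) (Module.Basis.finTwoProd ℝ)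
      !![Real.cos p.2, -p.1 * Real.sin p.2; Real.sin p.2, p.1 * Real.cos p.2]) with hB
  have B_det : ∀ p, (B p).det = p.1 := by
    intro p
    conv_rhs => rw [← one_mul p.1, ← Real.cos_sq_add_sin_sq p.2]
    simp only [hB, neg_mul, LinearMap.det_toContinuousLinearMap, LinearMap.det_toLin,
      Matrix.det_fin_two_of, sub_neg_eq_add]
    ring
  have hder : ∀ p ∈ s, HasFDerivWithinAt polarCoord.symm (B p) s p := fun p _ =>
    (hasFDerivAt_polarCoord_symm p).hasFDerivWithinAt
  have hinj : Set.InjOn polarCoord.symm s := by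
    have := polarCoord.symm.injOn
    rw [polarCoord.symm_source] at this
    exact this.mono hsub
  rw [lintegral_image_eq_lintegral_abs_det_fderiv_mul volume hs hder hinj
    (fun y => G (e2equiv.symm y))]
  apply setLIntegral_congr_fun hs
  intro p hp
  dsimp only
  rw [B_det, e2equiv_symm_polar]
  congr 2
  exact abs_of_pos (hsub hp).1

lemma trace_transfer (P : ℝ → Prop) (hper : ∀ θ, P (θ + 2*π) ↔ P θ)
    (h : ∀ᵐ θ ∂(volume.restrict (Set.Ico (0:ℝ) (2*π))), P θ) :
    ∀ᵐ θ ∂(volume.restrict (Set.Ioo (-π) π)), P θ := by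
  have h0 : volume ({θ | ¬ P θ} ∩ Set.Ico (0:ℝ) (2*π)) = 0 := by
    have := (ae_iff.mp h)
    rwa [Measure.restrict_apply' measurableSet_Ico] at this
  rw [ae_iff, Measure.restrict_apply' measurableSet_Ioo]
  have hsub : {θ | ¬ P θ} ∩ Set.Ioo (-π) π ⊆
      ({θ | ¬ P θ} ∩ Set.Ico (0:ℝ) (2*π)) ∪
        ((fun θ => θ + 2*π) ⁻¹' ({θ | ¬ P θ} ∩ Set.Ico (0:ℝ) (2*π))) := by
    rintro θ ⟨hP, hθ1, hθ2⟩
    rcases le_or_gt 0 θ with h0' | h0'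
    · left
      exact ⟨hP, h0', by nlinarith [Real.pi_pos]⟩
    · right
      refine ⟨fun hc => hP ((hper θ).mp hc), ?_, ?_⟩
      · show 0 ≤ θ + 2*π
        nlinarith [Real.pi_pos]
      · show θ + 2*π < 2*π
        nlinarith
  apply measure_mono_null hsub
  apply measure_union_null h0
  obtain ⟨N, hNsub, hNm, hN0⟩ := exists_measurable_superset_of_null h0
  apply measure_mono_null (Set.preimage_mono hNsub)
  rw [measure_preimage_add_right]
  exact hN0

lemma radial_estimate (m : ℕ) (u : E2 → Em m)
    (hu_diff : ∀ x ∈ ball (0:E2) 1, DifferentiableAt ℝ u x)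
    (v : E2) (hv : ‖v‖ = 1) (b : ℝ) (hb : 0 < b) (hb1 : b < 1) (C : ℝ) (hC : 0 < C)
    (hsl : ∫⁻ r in Set.Ioo b 1, ENNReal.ofReal (‖fderiv ℝ u (r • v)‖^2)
        ≤ ENNReal.ofReal (C^2/(1 - b))) :
    ∀ s₁ ∈ Set.Ioo b 1, ∀ s₂ ∈ Set.Ioo b 1, ‖u (s₁ • v) - u (s₂ • v)‖ ≤ C := by
  set N : ℝ → ℝ := fun r => ‖fderiv ℝ u (r • v)‖ with hN
  have hNm : Measurable N := by
    apply Measurable.norm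
    exact (measurable_fderiv ℝ u).comp (measurable_id.smul_const v)
  have hNnn : ∀ r, 0 ≤ N r := fun r => norm_nonneg _
  -- L¹ bound via Cauchy–Schwarz
  have hL : ∫⁻ r in Set.Ioo b 1, ENNReal.ofReal (N r) ≤ ENNReal.ofReal C := by
    have hconj : Real.HolderConjugate 2 2 := Real.HolderConjugate.two_two
    have := ENNReal.lintegral_mul_le_Lp_mul_Lq (volume.restrict (Set.Ioo b 1)) hconj
      (f := fun r => ENNReal.ofReal (N r)) (g := fun _ => 1)
      (hNm.ennreal_ofReal.aemeasurable) aemeasurable_const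
    simp only [Pi.mul_apply, mul_one, ENNReal.one_rpow] at this
    have h2 : ∀ r : ℝ, (ENNReal.ofReal (N r)) ^ (2:ℕ) = ENNReal.ofReal (N r ^ 2) := by
      intro r
      rw [ENNReal.ofReal_pow (hNnn r)]
    simp only [show (2:ℝ) = ((2:ℕ):ℝ) by norm_num, ENNReal.rpow_natCast] at this
    simp only [h2] at this
    have hone : ∫⁻ (_ : ℝ) in Set.Ioo b 1, (1:ℝ≥0∞) = ENNReal.ofReal (1 - b) := by
      rw [setLIntegral_one, Real.volume_Ioo]
    rw [hone] at this
    refine le_trans this ?_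
    have hfb : (0:ℝ) < 1 - b := by linarith
    calc (∫⁻ r in Set.Ioo b 1, ENNReal.ofReal (N r ^ 2)) ^ (1/(2:ℝ))
          * ENNReal.ofReal (1 - b) ^ (1/(2:ℝ))
        ≤ ENNReal.ofReal (C^2/(1-b)) ^ (1/(2:ℝ)) * ENNReal.ofReal (1 - b) ^ (1/(2:ℝ)) := by
          gcongr
      _ = ENNReal.ofReal ((C^2/(1-b)) ^ (1/(2:ℝ)) * (1 - b) ^ (1/(2:ℝ))) := by
          rw [ENNReal.ofReal_rpow_of_pos (by positivity), ENNReal.ofReal_rpow_of_pos hfb,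
            ← ENNReal.ofReal_mul (by positivity)]
      _ = ENNReal.ofReal C := by
          congr 1
          rw [← Real.mul_rpow (by positivity) (by positivity), div_mul_cancel₀ _ hfb.ne',
            ← Real.sqrt_eq_rpow, Real.sqrt_sq hC.le]
  -- integrability of N on Ioo b 1
  have hNint : IntegrableOn N (Set.Ioo b 1) := by
    refine ⟨hNm.aestronglyMeasurable, ?_⟩
    rw [hasFiniteIntegral_iff_norm]
    calc ∫⁻ r in Set.Ioo b 1, ENNReal.ofReal ‖N r‖
        = ∫⁻ r in Set.Ioo b 1, ENNReal.ofReal (N r) := by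
          congr 1; funext r; rw [Real.norm_eq_abs, abs_of_nonneg (hNnn r)]
      _ ≤ ENNReal.ofReal C := hL
      _ < ⊤ := ENNReal.ofReal_lt_top
  have hNintval : ∫ r in Set.Ioo b 1, N r ≤ C := by
    rw [MeasureTheory.integral_eq_lintegral_of_nonneg_ae
      (Filter.Eventually.of_forall hNnn) hNm.aestronglyMeasurable]
    calc (∫⁻ r in Set.Ioo b 1, ENNReal.ofReal (N r)).toReal
        ≤ (ENNReal.ofReal C).toReal := ENNReal.toReal_mono ENNReal.ofReal_ne_top hL
      _ = C := ENNReal.toReal_ofReal hC.le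
  -- derivative along the ray
  set D : ℝ → Em m := fun r => (fderiv ℝ u (r • v)) v with hD
  have hDm : Measurable D := (measurable_fderiv_apply_const ℝ u v).comp (measurable_id.smul_const v)
  have hDle : ∀ r, ‖D r‖ ≤ N r := by
    intro r
    calc ‖(fderiv ℝ u (r • v)) v‖ ≤ ‖fderiv ℝ u (r • v)‖ * ‖v‖ :=
          (fderiv ℝ u (r • v)).le_opNorm v
      _ = N r := by rw [hv, mul_one]
  have hder : ∀ r ∈ Set.Ioo b 1, HasDerivAt (fun s => u (s • v)) (D r) r := by
    intro r hr
    have hball : r • v ∈ ball (0:E2) 1 := by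
      rw [mem_ball_zero_iff, norm_smul, hv, mul_one, Real.norm_eq_abs,
        abs_of_pos (lt_trans hb hr.1)]
      exact hr.2
    have h1 : HasDerivAt (fun s : ℝ => s • v) v r := by
      simpa using (hasDerivAt_id r).smul_const v
    exact ((hu_diff _ hball).hasFDerivAt.comp_hasDerivAt r h1)
  -- main bound for ordered pairs
  suffices H : ∀ s₁ ∈ Set.Ioo b 1, ∀ s₂ ∈ Set.Ioo b 1, s₁ ≤ s₂ →
      ‖u (s₂ • v) - u (s₁ • v)‖ ≤ C by
    intro s₁ h₁ s₂ h₂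
    rcases le_total s₁ s₂ with h | h
    · rw [norm_sub_rev]; exact H s₁ h₁ s₂ h₂ h
    · exact H s₂ h₂ s₁ h₁ h
  intro s₁ h₁ s₂ h₂ hle
  have hIcc : Set.uIcc s₁ s₂ ⊆ Set.Ioo b 1 := by
    rw [Set.uIcc_of_le hle]
    exact fun r hr => ⟨lt_of_lt_of_le h₁.1 hr.1, lt_of_le_of_lt hr.2 h₂.2⟩
  have hDint : IntervalIntegrable D volume s₁ s₂ := by
    rw [intervalIntegrable_iff]
    refine Integrable.mono' (hNint.mono_set ?_) hDm.aestronglyMeasurable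
      (Filter.Eventually.of_forall hDle)
    exact fun r hr => hIcc (Set.uIoc_subset_uIcc hr)
  have hftc : u (s₂ • v) - u (s₁ • v) = ∫ r in s₁..s₂, D r :=
    (intervalIntegral.integral_eq_sub_of_hasDerivAt
      (fun r hr => hder r (hIcc hr)) hDint).symm
  rw [hftc]
  calc ‖∫ r in s₁..s₂, D r‖ ≤ ∫ r in s₁..s₂, ‖D r‖ :=
        intervalIntegral.norm_integral_le_integral_norm hle
    _ = ∫ r in Set.Ioc s₁ s₂, ‖D r‖ := by
        rw [intervalIntegral.integral_of_le hle]
    _ ≤ ∫ r in Set.Ioc s₁ s₂, N r := by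
        apply setIntegral_mono_on
        · refine Integrable.mono' (hNint.mono_set ?_) hDm.norm.aestronglyMeasurable
            (Filter.Eventually.of_forall (fun r => by rw [norm_norm]; exact hDle r))
          intro r hr
          exact ⟨lt_of_lt_of_le h₁.1 hr.1.le, lt_of_le_of_lt hr.2 h₂.2⟩
        · apply hNint.mono_set
          intro r hr
          exact ⟨lt_of_lt_of_le h₁.1 hr.1.le, lt_of_le_of_lt hr.2 h₂.2⟩
        · exact measurableSet_Ioc
        · exact fun r _ => hDle r
    _ ≤ ∫ r in Set.Ioo b 1, N r := by
        apply setIntegral_mono_set hNint (Filter.Eventually.of_forall hNnn)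
        apply Filter.Eventually.of_forall
        intro r hr
        exact ⟨lt_of_lt_of_le h₁.1 hr.1.le, lt_of_le_of_lt hr.2 h₂.2⟩
    _ ≤ C := hNintval

set_option maxHeartbeats 1000000 in
lemma main_estimate (m : ℕ) (u : E2 → Em m)
    (hu_diff : ∀ x ∈ ball (0:E2) 1, DifferentiableAt ℝ u x)
    (hu_grad : IntegrableOn (fun x => ‖fderiv ℝ u x‖ ^ 2) (ball (0:E2) 1))
    (R₀ : ℝ) (hR₀ : 0 < R₀) (F : E2 → ℝ → ℝ)
    (hosc : ∀ (a : E2) (ϱ : ℝ), 0 < ϱ → ϱ < R₀ → ball a ϱ ⊆ ball 0 1 →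
      ∀ x ∈ ball a (ϱ/2), ∀ y ∈ ball a (ϱ/2), ‖u x - u y‖ ≤ F a ϱ)
    (hF : ∀ ε > 0, ∃ ϱ₀ > 0, ∀ a : E2, ∀ ϱ, 0 < ϱ → ϱ < ϱ₀ → ϱ < R₀ → F a ϱ < ε)
    (ψ : E2 → Em m) (hψ : ContinuousOn ψ (sphere 0 1))
    (hGae : ∀ᵐ θ ∂(volume.restrict (Set.Ioo (-π) π)),
      Filter.Tendsto (fun r => u (polar r θ)) (nhdsWithin 1 (Set.Iio 1))
        (nhds (ψ (polar 1 θ)))) :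
    ∀ ε > 0, ∃ δ > 0, ∀ p ∈ sphere (0:E2) 1, ∀ x ∈ ball (0:E2) 1,
      dist x p < δ → ‖u x - ψ p‖ < ε := by
  intro ε hε
  set ε' := ε/4 with hε'def
  have hε' : 0 < ε' := by positivity
  -- uniform continuity of ψ on the sphere
  obtain ⟨δ₁, hδ₁pos, hδ₁⟩ := Metric.uniformContinuousOn_iff.mp
    ((isCompact_sphere (0:E2) 1).uniformContinuousOn_of_continuous hψ) ε' hε'
  -- modulus for F
  obtain ⟨ϱ₀, hϱ₀pos, hϱ₀⟩ := hF ε' hε'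
  -- absolute continuity of the Dirichlet energy
  set G : E2 → ℝ≥0∞ := fun x => ENNReal.ofReal (‖fderiv ℝ u x‖^2) with hGdef
  have hGm : Measurable G := ((measurable_fderiv ℝ u).norm.pow measurable_const).ennreal_ofReal
  have hfin : ∫⁻ x, G x ∂(volume.restrict (ball (0:E2) 1)) ≠ ⊤ :=
    hu_grad.lintegral_lt_top.ne
  set η := ε'^2/128 with hηdef
  have hηpos : 0 < η := by positivity
  obtain ⟨δ₂, hδ₂pos, hδ₂⟩ := exists_pos_setLIntegral_lt_of_measure_lt hfin
    (ε := ENNReal.ofReal η) (ENNReal.ofReal_pos.mpr hηpos).ne'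
  -- a real threshold below δ₂
  obtain ⟨t, ht0, htδ⟩ : ∃ t : ℝ, 0 < t ∧ ENNReal.ofReal t < δ₂ := by
    rcases eq_or_ne δ₂ ⊤ with h | h
    · exact ⟨1, one_pos, by rw [h]; exact ENNReal.ofReal_lt_top⟩
    · have htp := ENNReal.toReal_pos hδ₂pos.ne' h
      refine ⟨δ₂.toReal/2, by linarith, ?_⟩
      conv_rhs => rw [← ENNReal.ofReal_toReal h]
      rw [ENNReal.ofReal_lt_ofReal_iff htp]
      linarith
  set δ := min (min (ϱ₀/2) (R₀/2)) (min (min (δ₁/4) (Real.sqrt t)) (1/4)) with hδdef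
  have hδpos : 0 < δ := by
    have hst := Real.sqrt_pos.mpr ht0
    refine lt_min (lt_min (by positivity) (by positivity))
      (lt_min (lt_min (by positivity) hst) (by norm_num))
  refine ⟨δ, hδpos, ?_⟩
  intro p hp x hx hdist
  rw [mem_sphere_zero_iff_norm] at hp
  rw [mem_ball_zero_iff] at hx
  set d := 1 - ‖x‖ with hddef
  have hd0 : 0 < d := by simp [hddef]; linarith
  have hdδ : d < δ := by
    have h1 : ‖p‖ - ‖x‖ ≤ ‖p - x‖ := norm_sub_norm_le p x
    have h2 : ‖p - x‖ = dist x p := by rw [dist_eq_norm, norm_sub_rev]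
    simp only [hddef, ← hp]
    linarith
  have hδa : δ ≤ ϱ₀/2 := le_trans (min_le_left _ _) (min_le_left _ _)
  have hδb : δ ≤ R₀/2 := le_trans (min_le_left _ _) (min_le_right _ _)
  have hδδ₁ : δ ≤ δ₁/4 :=
    le_trans (min_le_right _ _) (le_trans (min_le_left _ _) (min_le_left _ _))
  have hδd : δ ≤ Real.sqrt t :=
    le_trans (min_le_right _ _) (le_trans (min_le_left _ _) (min_le_right _ _))
  have hδe : δ ≤ 1/4 := le_trans (min_le_right _ _) (min_le_right _ _)
  have hd4 : d < 1/4 := lt_of_lt_of_le hdδ hδe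
  have hdR : d < R₀ := by linarith [lt_of_lt_of_le hdδ hδb]
  have hdϱ : d < ϱ₀ := by linarith [lt_of_lt_of_le hdδ hδa]
  have hdδ₁ : d < δ₁/4 := lt_of_lt_of_le hdδ hδδ₁
  have hdt : d < Real.sqrt t := lt_of_lt_of_le hdδ hδd
  have hxnorm : ‖x‖ = 1 - d := by simp [hddef]
  have hx0 : x ≠ 0 := by
    intro h
    rw [h, norm_zero] at hxnorm
    linarith
  obtain ⟨θx, hθxmem, hθxeq⟩ := exists_angle x hx0
  rw [hxnorm] at hθxeq
  -- the angular window
  set a := if θx ≤ 0 then θx else θx - d/8 with hadef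
  set W := Set.Ioo a (a + d/8) with hWdef
  have hpi : (1:ℝ) < π := by linarith [Real.pi_gt_three]
  have hWsub : W ⊆ Set.Ioo (-π) π := by
    rintro θ ⟨h1, h2⟩
    rw [hadef] at h1 h2
    split_ifs at h1 h2 with hcase
    · exact ⟨lt_trans hθxmem.1 h1, by nlinarith⟩
    · push_neg at hcase
      constructor
      · nlinarith
      · have := hθxmem.2
        nlinarith
  have hWnear : ∀ θ ∈ W, |θ - θx| < d/8 := by
    rintro θ ⟨h1, h2⟩
    rw [hadef] at h1 h2
    rw [abs_lt]
    split_ifs at h1 h2 <;> constructor <;> linarith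
  have hWvol : volume W = ENNReal.ofReal (d/8) := by
    rw [hWdef, Real.volume_Ioo]
    congr 1
    ring
  -- the sector
  set s : Set (ℝ×ℝ) := Set.Ioo (1 - 2*d) 1 ×ˢ W with hsdef
  have hrhalf : ∀ r ∈ Set.Ioo (1 - 2*d) (1:ℝ), (1:ℝ)/2 ≤ r := by
    rintro r ⟨h1, _⟩
    linarith
  have hsm : MeasurableSet s := measurableSet_Ioo.prod measurableSet_Ioo
  have hssub : s ⊆ polarCoord.target := by
    rintro ⟨r, θ⟩ ⟨hr, hθ⟩
    rw [polarCoord_target_eq]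
    exact ⟨by simp only [Set.mem_Ioi]; linarith [hrhalf r hr], hWsub hθ⟩
  set Sp := (fun q : ℝ × ℝ => polar q.1 q.2) '' s with hSpdef
  have hSpball : Sp ⊆ ball (0:E2) 1 := by
    rintro _ ⟨⟨r, θ⟩, ⟨hr, _⟩, rfl⟩
    exact polar_mem_ball r θ (by linarith [hrhalf r hr]) hr.2
  -- volume of the sector
  have hSpvol : volume Sp ≤ ENNReal.ofReal t := by
    have h1 : volume Sp = ∫⁻ x in Sp, (1:ℝ≥0∞) := (setLIntegral_one _).symm
    rw [h1, sector_lintegral (fun _ => (1:ℝ≥0∞)) measurable_const s hsm hssub]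
    calc ∫⁻ q in s, ENNReal.ofReal q.1 * 1
        ≤ ∫⁻ _ in s, (1:ℝ≥0∞) := by
          apply setLIntegral_mono measurable_const
          rintro ⟨r, θ⟩ ⟨hr, _⟩
          rw [mul_one]
          exact ENNReal.ofReal_le_one.mpr hr.2.le
      _ = volume s := setLIntegral_one _
      _ ≤ ENNReal.ofReal t := by
          rw [hsdef, Measure.volume_eq_prod, Measure.prod_prod, Real.volume_Ioo, hWvol,
            ← ENNReal.ofReal_mul (by linarith)]
          apply ENNReal.ofReal_le_ofReal
          have hd2 : d^2 < t := (Real.lt_sqrt hd0.le).mp hdt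
          nlinarith
  -- energy bound on the sector
  have hE : ∫⁻ x in Sp, G x < ENNReal.ofReal η := by
    have hμb : (volume.restrict (ball (0:E2) 1)) Sp < δ₂ := by
      rw [Measure.restrict_apply' measurableSet_ball]
      exact lt_of_le_of_lt (le_trans (measure_mono Set.inter_subset_left) hSpvol) htδ
    have := hδ₂ Sp hμb
    rwa [Measure.restrict_restrict_of_subset hSpball] at this
  -- drop the Jacobian factor
  have hpolarm : Measurable (fun q : ℝ × ℝ => polar q.1 q.2) := by
    have heq : (fun q : ℝ × ℝ => polar q.1 q.2)
        = fun q : ℝ × ℝ => e2equiv.symm (q.1 * Real.cos q.2, q.1 * Real.sin q.2) :=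
      funext fun q => (e2equiv_symm_polar q).symm
    rw [heq]
    exact e2equiv.symm.measurable.comp
      ((continuous_fst.mul (Real.continuous_cos.comp continuous_snd)).prodMk
        (continuous_fst.mul (Real.continuous_sin.comp continuous_snd))).measurable
  set f : ℝ × ℝ → ℝ≥0∞ := fun q => G (polar q.1 q.2) with hfdef
  have hfm : Measurable f := hGm.comp hpolarm
  have hJ : ∫⁻ q in s, f q ≤ ENNReal.ofReal (2*η) := by
    have hsec := sector_lintegral G hGm s hsm hssub
    have hptwise : ∀ q ∈ s, f q ≤ 2 * (ENNReal.ofReal q.1 * f q) := by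
      rintro ⟨r, θ⟩ ⟨hr, _⟩
      have h12 : ENNReal.ofReal (1/2) ≤ ENNReal.ofReal r :=
        ENNReal.ofReal_le_ofReal (hrhalf r hr)
      calc f (r, θ) = (2 * ENNReal.ofReal (1/2)) * f (r, θ) := by
            rw [← ENNReal.ofReal_ofNat, ← ENNReal.ofReal_mul (by norm_num)]
            norm_num
        _ ≤ (2 * ENNReal.ofReal r) * f (r, θ) := by gcongr
        _ = 2 * (ENNReal.ofReal r * f (r, θ)) := by rw [mul_assoc]
    calc ∫⁻ q in s, f q
        ≤ ∫⁻ q in s, 2 * (ENNReal.ofReal q.1 * f q) := by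
          apply setLIntegral_mono (by fun_prop) hptwise
      _ = 2 * ∫⁻ q in s, ENNReal.ofReal q.1 * f q := lintegral_const_mul 2 (by fun_prop)
      _ = 2 * ∫⁻ x in Sp, G x := by rw [hsec]
      _ ≤ 2 * ENNReal.ofReal η := mul_le_mul_right hE.le 2
      _ = ENNReal.ofReal (2*η) := by
          rw [ENNReal.ofReal_mul (by norm_num), ENNReal.ofReal_ofNat]
  -- Tonelli
  have hTon : ∫⁻ q in s, f q
      = ∫⁻ θ in W, ∫⁻ r in Set.Ioo (1 - 2*d) 1, f (r, θ) := by
    rw [hsdef, Measure.volume_eq_prod, ← Measure.prod_restrict,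
      lintegral_prod_symm f hfm.aemeasurable]
  have hhm : Measurable (fun θ => ∫⁻ r in Set.Ioo (1 - 2*d) 1, f (r, θ)) :=
    Measurable.lintegral_prod_left' hfm
  -- Markov selection of a good angle
  set c := ENNReal.ofReal (ε'^2/(2*d)) with hcdef
  have hcpos : c ≠ 0 := (ENNReal.ofReal_pos.mpr (by positivity)).ne'
  have hbadF : (volume.restrict W) {θ | c ≤ ∫⁻ r in Set.Ioo (1 - 2*d) 1, f (r, θ)}
      ≤ ENNReal.ofReal (d/32) := by
    calc (volume.restrict W) {θ | c ≤ ∫⁻ r in Set.Ioo (1 - 2*d) 1, f (r, θ)}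
        ≤ (∫⁻ θ in W, ∫⁻ r in Set.Ioo (1 - 2*d) 1, f (r, θ)) / c :=
          meas_ge_le_lintegral_div hhm.aemeasurable hcpos ENNReal.ofReal_ne_top
      _ ≤ ENNReal.ofReal (2*η) / c := by
          gcongr
          rw [← hTon]; exact hJ
      _ = ENNReal.ofReal (d/32) := by
          rw [hcdef, ← ENNReal.ofReal_div_of_pos (by positivity)]
          congr 1
          rw [hηdef]
          field_simp
          ring
  have hbadT : (volume.restrict W) {θ | ¬ Filter.Tendsto (fun r => u (polar r θ))
      (nhdsWithin 1 (Set.Iio 1)) (nhds (ψ (polar 1 θ)))} = 0 := by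
    have h0 := ae_iff.mp hGae
    rw [Measure.restrict_apply' measurableSet_Ioo] at h0
    rw [Measure.restrict_apply' measurableSet_Ioo]
    exact measure_mono_null (Set.inter_subset_inter_right _ hWsub) h0
  obtain ⟨θd, hθdW, hθdF, hθdT⟩ : ∃ θd ∈ W,
      (∫⁻ r in Set.Ioo (1 - 2*d) 1, f (r, θd)) < c ∧
      Filter.Tendsto (fun r => u (polar r θd)) (nhdsWithin 1 (Set.Iio 1))
        (nhds (ψ (polar 1 θd))) := by
    by_contra hcon
    push_neg at hcon
    have hsubW : W ⊆ {θ | c ≤ ∫⁻ r in Set.Ioo (1 - 2*d) 1, f (r, θ)}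
        ∪ {θ | ¬ Filter.Tendsto (fun r => u (polar r θ))
            (nhdsWithin 1 (Set.Iio 1)) (nhds (ψ (polar 1 θ)))} := by
      intro θ hθ
      rcases le_or_gt c (∫⁻ r in Set.Ioo (1 - 2*d) 1, f (r, θ)) with h | h
      · exact Or.inl h
      · exact Or.inr (hcon θ hθ h)
    have hWmeas : (volume.restrict W) W = ENNReal.ofReal (d/8) := by
      rw [Measure.restrict_apply' measurableSet_Ioo, Set.inter_self, hWvol]
    have : ENNReal.ofReal (d/8) ≤ ENNReal.ofReal (d/32) + 0 := by
      rw [← hWmeas]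
      calc (volume.restrict W) W ≤ (volume.restrict W) ({θ | c ≤ _} ∪ {θ | ¬ _}) :=
            measure_mono hsubW
        _ ≤ _ + _ := measure_union_le _ _
        _ ≤ ENNReal.ofReal (d/32) + 0 := by
            exact add_le_add hbadF (le_of_eq hbadT)
    rw [add_zero, ENNReal.ofReal_le_ofReal_iff (by positivity)] at this
    linarith
  -- the good ray
  set v : E2 := polar 1 θd with hvdef
  have hvnorm : ‖v‖ = 1 := norm_polar_one θd
  have hb : 0 < 1 - 2*d := by linarith
  have hb1 : 1 - 2*d < 1 := by linarith
  -- radial oscillation bound on the good ray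
  have hsl : ∫⁻ r in Set.Ioo (1 - 2*d) 1, ENNReal.ofReal (‖fderiv ℝ u (r • v)‖^2)
      ≤ ENNReal.ofReal (ε'^2/(1 - (1 - 2*d))) := by
    have heq : ∀ r : ℝ, ENNReal.ofReal (‖fderiv ℝ u (r • v)‖^2) = f (r, θd) := by
      intro r
      rw [hfdef]
      simp only [hGdef]
      rw [← polar_smul]
    simp only [heq]
    have h1 : (1:ℝ) - (1 - 2*d) = 2*d := by ring
    rw [h1]
    exact le_of_lt hθdF
  have hradial := radial_estimate m u hu_diff v hvnorm (1 - 2*d) hb hb1 ε' hε' hsl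
  -- pass to the limit along the ray using the trace
  set y : E2 := (1 - d) • v with hydef
  have hymem : (1 - d) ∈ Set.Ioo (1 - 2*d) (1:ℝ) := ⟨by linarith, by linarith⟩
  have hy1 : ‖u y - ψ v‖ ≤ ε' := by
    have hlim : Filter.Tendsto (fun r : ℝ => u (r • v)) (nhdsWithin 1 (Set.Iio 1))
        (nhds (ψ v)) := by
      have heq : (fun r : ℝ => u (polar r θd)) = fun r : ℝ => u (r • v) := by
        funext r
        rw [hvdef, ← polar_smul]
      rw [← heq, hvdef]
      exact hθdT
    have htendsN : Filter.Tendsto (fun r : ℝ => ‖u y - u (r • v)‖)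
        (nhdsWithin 1 (Set.Iio 1)) (nhds ‖u y - ψ v‖) :=
      (Filter.Tendsto.sub tendsto_const_nhds hlim).norm
    have hev : ∀ᶠ r in nhdsWithin (1:ℝ) (Set.Iio 1), ‖u y - u (r • v)‖ ≤ ε' := by
      filter_upwards [Ioo_mem_nhdsLT_of_mem
        (show (1:ℝ) ∈ Set.Ioc (1-2*d) 1 from ⟨hb1, le_refl 1⟩)] with r hr
      exact hradial (1 - d) hymem r hr
    exact le_of_tendsto htendsN hev
  -- interior oscillation estimate connecting x and y
  have hxy : ‖u x - u y‖ ≤ F x d := by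
    have hballsub : ball x d ⊆ ball (0:E2) 1 := by
      intro z hz
      rw [mem_ball] at hz ⊢
      calc dist z 0 ≤ dist z x + dist x 0 := dist_triangle _ _ _
        _ < d + (1 - d) := by
            apply add_lt_add_of_lt_of_le hz
            rw [dist_zero_right, hxnorm]
        _ = 1 := by ring
    have hsqrt2 : Real.sqrt 2 ≤ 2 := by
      nlinarith [Real.sq_sqrt (by norm_num : (0:ℝ) ≤ 2), Real.sqrt_nonneg 2]
    have hyform : y = polar (1 - d) θd := by rw [hydef, hvdef, ← polar_smul]
    have hdistxy : dist x y < d/2 := by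
      rw [hθxeq, hyform]
      calc dist (polar (1-d) θx) (polar (1-d) θd)
          ≤ Real.sqrt 2 * ((1-d) * |θx - θd|) := dist_polar_angle _ _ _ (by linarith)
        _ ≤ 2 * (1 * (d/8)) := by
            have h1 : |θx - θd| ≤ d/8 := by
              rw [abs_sub_comm]
              exact (hWnear θd hθdW).le
            have h2 : (0:ℝ) ≤ |θx - θd| := abs_nonneg _
            have h3 : (1:ℝ) - d ≤ 1 := by linarith
            have h4 : (0:ℝ) ≤ 1 - d := by linarith
            have h5 : (1-d) * |θx - θd| ≤ 1 * (d/8) := by nlinarith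
            nlinarith [Real.sqrt_nonneg 2]
        _ < d/2 := by linarith
    have := hosc x d hd0 hdR hballsub x (mem_ball_self (by linarith)) y
      (by rw [mem_ball, dist_comm]; exact hdistxy)
    exact this
  have hFxd : F x d < ε' := hϱ₀ x d hd0 hdϱ hdR
  -- the boundary values are close
  have hψclose : dist (ψ v) (ψ p) < ε' := by
    have hvs : v ∈ sphere (0:E2) 1 := by
      rw [mem_sphere_zero_iff_norm]; exact hvnorm
    have hps : p ∈ sphere (0:E2) 1 := by rw [mem_sphere_zero_iff_norm]; exact hp
    apply hδ₁ v hvs p hps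
    have hsqrt2 : Real.sqrt 2 ≤ 2 := by
      nlinarith [Real.sq_sqrt (by norm_num : (0:ℝ) ≤ 2), Real.sqrt_nonneg 2]
    have h1 : dist v (polar 1 θx) ≤ d/4 := by
      rw [hvdef]
      calc dist (polar 1 θd) (polar 1 θx)
          ≤ Real.sqrt 2 * (1 * |θd - θx|) := dist_polar_angle _ _ _ (by norm_num)
        _ ≤ d/4 := by
            have h1 : |θd - θx| ≤ d/8 := (hWnear θd hθdW).le
            have h2 : (0:ℝ) ≤ |θd - θx| := abs_nonneg _
            nlinarith [Real.sqrt_nonneg 2]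
    have h2 : dist (polar 1 θx) x = d := by
      rw [hθxeq, dist_polar_radial]
      rw [abs_of_nonneg (by linarith)]
      ring
    calc dist v p ≤ dist v (polar 1 θx) + dist (polar 1 θx) x + dist x p :=
          dist_triangle4 _ _ _ _
      _ ≤ d/4 + d + δ := by
          apply add_le_add (add_le_add h1 (le_of_eq h2)) hdist.le
      _ < δ₁ := by linarith
  -- conclusion
  have hsplit : u x - ψ p = (u x - u y) + (u y - ψ v) + (ψ v - ψ p) := by abel
  have htri : ‖u x - ψ p‖ ≤ ‖u x - u y‖ + ‖u y - ψ v‖ + ‖ψ v - ψ p‖ := by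
    rw [hsplit]
    calc ‖(u x - u y) + (u y - ψ v) + (ψ v - ψ p)‖
        ≤ ‖(u x - u y) + (u y - ψ v)‖ + ‖ψ v - ψ p‖ := norm_add_le _ _
      _ ≤ ‖u x - u y‖ + ‖u y - ψ v‖ + ‖ψ v - ψ p‖ :=
          add_le_add_left (norm_add_le _ _) _
  have hfin2 : ‖ψ v - ψ p‖ < ε' := by rwa [dist_eq_norm] at hψclose
  have : ‖u x - ψ p‖ < 3*ε' := by linarith
  rw [hε'def] at this
  linarith

end StrzeleckiAux

/-- Strzelecki's lemma: if `u ∈ W^{1,2} ∩ C⁰(D²)` satisfies a uniform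
interior oscillation estimate `|u(x)-u(y)| ≤ F(a,ϱ)` on half-discs `B_{ϱ/2}(a)`, with
`F(·,ϱ) → 0` uniformly as `ϱ → 0`, and the boundary trace of `u` (realized as the a.e.
radial limit) is a continuous function `ψ` on `∂D²`, then `u` extends continuously to
the closed disc, the extension agreeing with `ψ` on `∂D²`. -/
theorem strzelecki_boundary_continuity (m : ℕ) (u : E2 → Em m)
    (hu_cont : ContinuousOn u (ball 0 1))
    -- `u ∈ W^{1,2}(D²)`:
    (hu_diff : ∀ x ∈ ball (0:E2) 1, DifferentiableAt ℝ u x)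
    (hu_grad : IntegrableOn (fun x => ‖fderiv ℝ u x‖ ^ 2) (ball (0:E2) 1))
    (R₀ : ℝ) (hR₀ : 0 < R₀) (F : E2 → ℝ → ℝ)
    (hF_pos : ∀ a ϱ, 0 < ϱ → ϱ < R₀ → 0 < F a ϱ)
    -- interior oscillation estimate:
    (hosc : ∀ (a : E2) (ϱ : ℝ), 0 < ϱ → ϱ < R₀ → ball a ϱ ⊆ ball 0 1 →
      ∀ x ∈ ball a (ϱ/2), ∀ y ∈ ball a (ϱ/2), ‖u x - u y‖ ≤ F a ϱ)
    -- `F(·,ϱ) → 0` uniformly as `ϱ → 0`: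
    (hF : ∀ ε > 0, ∃ ϱ₀ > 0, ∀ a : E2, ∀ ϱ, 0 < ϱ → ϱ < ϱ₀ → ϱ < R₀ → F a ϱ < ε)
    -- continuous trace `ψ` on `∂D²`, attained as radial limit for a.e. angle:
    (ψ : E2 → Em m) (hψ : ContinuousOn ψ (sphere 0 1))
    (htrace : ∀ᵐ θ ∂(volume.restrict (Set.Ico (0:ℝ) (2 * π))),
      Filter.Tendsto (fun r => u (polar r θ)) (nhdsWithin 1 (Set.Iio 1))
        (nhds (ψ (polar 1 θ)))) :
    ∃ v : E2 → Em m, ContinuousOn v (closedBall 0 1) ∧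
      (∀ x ∈ ball (0:E2) 1, v x = u x) ∧ (∀ x ∈ sphere (0:E2) 1, v x = ψ x) := by
  have hGae : ∀ᵐ θ ∂(volume.restrict (Set.Ioo (-π) π)),
      Filter.Tendsto (fun r => u (polar r θ)) (nhdsWithin 1 (Set.Iio 1))
        (nhds (ψ (polar 1 θ))) := by
    apply trace_transfer
    · intro θ
      have h1 : (fun r => u (polar r (θ + 2*π))) = (fun r => u (polar r θ)) :=
        funext fun r => by rw [polar_periodic]
      have h2 : ψ (polar 1 (θ + 2*π)) = ψ (polar 1 θ) := by rw [polar_periodic]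
      rw [h1, h2]
    · exact htrace
  have hmain := main_estimate m u hu_diff hu_grad R₀ hR₀ F hosc hF ψ hψ hGae
  set vext : E2 → Em m := fun z => if ‖z‖ < 1 then u z else ψ ((‖z‖)⁻¹ • z) with hvext
  have hsphere_val : ∀ z, ‖z‖ = 1 → vext z = ψ z := by
    intro z hz
    rw [hvext]
    simp only [hz]
    norm_num
  refine ⟨vext, ?_, ?_, ?_⟩
  · -- continuity
    intro z hz
    by_cases hzlt : ‖z‖ < 1
    · -- interior point
      have hzball : z ∈ ball (0:E2) 1 := mem_ball_zero_iff.mpr hzlt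
      have hcontAt : ContinuousAt u z := hu_cont.continuousAt (isOpen_ball.mem_nhds hzball)
      have heq : u =ᶠ[nhds z] vext := by
        filter_upwards [isOpen_ball.mem_nhds hzball] with w hw
        rw [mem_ball_zero_iff] at hw
        rw [hvext]
        simp [hw]
      exact (hcontAt.congr heq).continuousWithinAt
    · -- boundary point
      have hz1 : ‖z‖ = 1 := le_antisymm (mem_closedBall_zero_iff.mp hz) (not_lt.mp hzlt)
      have hzs : z ∈ sphere (0:E2) 1 := mem_sphere_zero_iff_norm.mpr hz1
      rw [Metric.continuousWithinAt_iff]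
      intro ε hε
      obtain ⟨δm, hδm, hm⟩ := hmain (ε/2) (by linarith)
      obtain ⟨δψ, hδψ, hψ2⟩ := Metric.uniformContinuousOn_iff.mp
        ((isCompact_sphere (0:E2) 1).uniformContinuousOn_of_continuous hψ) (ε/2) (by linarith)
      refine ⟨min δm δψ, lt_min hδm hδψ, ?_⟩
      intro w hw hdistw
      rw [hsphere_val z hz1]
      by_cases hwlt : ‖w‖ < 1
      · have hwball : w ∈ ball (0:E2) 1 := mem_ball_zero_iff.mpr hwlt
        have h1 : ‖u w - ψ z‖ < ε/2 :=
          hm z hzs w hwball (lt_of_lt_of_le hdistw (min_le_left _ _))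
        have h2 : vext w = u w := by rw [hvext]; simp [hwlt]
        rw [h2, dist_eq_norm]
        linarith
      · have hw1 : ‖w‖ = 1 := le_antisymm (mem_closedBall_zero_iff.mp hw) (not_lt.mp hwlt)
        have hws : w ∈ sphere (0:E2) 1 := mem_sphere_zero_iff_norm.mpr hw1
        rw [hsphere_val w hw1]
        have := hψ2 w hws z hzs (lt_of_lt_of_le hdistw (min_le_right _ _))
        linarith
  · intro z hz
    rw [mem_ball_zero_iff] at hz
    rw [hvext]
    simp [hz]
  · intro z hz
    exact hsphere_val z (mem_sphere_zero_iff_norm.mp hz)
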